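/- Let U ⊆ R^{m×n} \ {0} be nonempty and bounded, f: U → R^k, and β ∈ (0,1). Suppose there exists J ∈ N such that ‖f(X)‖₂ ≥ 2^{−j} for all X ∈ U with ‖X‖₂ ≥ 2^{−βj} (i.e., X ∉ B(0, 2^{−βj})) and all j ≥ J. Then inf{‖f(X)‖₂ / ‖X‖₂^{1/β} : X ∈ U} > 0. -/

import Mathlib

/-- If `‖f(X)‖ ≥ 2^{−j}` for all `X ∈ U` with `‖X‖ ≥ 2^{−βj}` and all `j ≥ J`, then
`inf { ‖f(X)‖ / ‖X‖^{1/β} : X ∈ U } > 0` for bounded `U` not containing `0`. -/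
theorem stmt16 (m n k : ℕ) (U : Set (EuclideanSpace ℝ (Fin m × Fin n)))
    (hne : U.Nonempty) (hbd : Bornology.IsBounded U)
    (h0 : (0 : EuclideanSpace ℝ (Fin m × Fin n)) ∉ U)
    (f : EuclideanSpace ℝ (Fin m × Fin n) → EuclideanSpace ℝ (Fin k))
    (β : ℝ) (hβ : β ∈ Set.Ioo (0 : ℝ) 1)
    (J : ℕ) (hJ : ∀ j : ℕ, J ≤ j → ∀ X ∈ U,
      (2 : ℝ) ^ (-(β * (j : ℝ))) ≤ ‖X‖ → (2 : ℝ) ^ (-(j : ℝ)) ≤ ‖f X‖) :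
    ∃ c > 0, ∀ X ∈ U, c ≤ ‖f X‖ / ‖X‖ ^ (1 / β) := by
  obtain ⟨hβ0, hβ1⟩ := hβ
  obtain ⟨R, hR1, hR⟩ : ∃ R : ℝ, 1 ≤ R ∧ ∀ X ∈ U, ‖X‖ ≤ R := by
    obtain ⟨R0, hR0⟩ := hbd.exists_norm_le
    exact ⟨max R0 1, le_max_right _ _, fun X hX => (hR0 X hX).trans (le_max_left _ _)⟩
  have hRpow : (0:ℝ) < R ^ (1/β) := Real.rpow_pos_of_pos (by linarith) _
  refine ⟨min (1/2) ((2:ℝ) ^ (-(J:ℝ)) / R ^ (1/β)), ?_, ?_⟩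
  · exact lt_min (by norm_num) (div_pos (Real.rpow_pos_of_pos (by norm_num) _) hRpow)
  intro X hX
  have hXpos : 0 < ‖X‖ := by
    rw [norm_pos_iff]
    intro h
    exact h0 (h ▸ hX)
  have hXp : (0:ℝ) < ‖X‖ ^ (1/β) := Real.rpow_pos_of_pos hXpos _
  have hex : ∃ j : ℕ, J ≤ j ∧ (2:ℝ) ^ (-(β * (j:ℝ))) ≤ ‖X‖ := by
    obtain ⟨N, hN⟩ := exists_nat_gt (1/‖X‖)
    have hN2 : 1/‖X‖ ≤ (2:ℝ)^(N:ℝ) := by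
      calc 1/‖X‖ ≤ (N:ℝ) := hN.le
        _ ≤ (2:ℝ)^(N:ℝ) := by
            rw [Real.rpow_natCast]
            exact_mod_cast (Nat.lt_two_pow_self (n := N)).le
    refine ⟨max J ⌈(N:ℝ)/β⌉₊, le_max_left _ _, ?_⟩
    have h1 : (N:ℝ) ≤ β * ((max J ⌈(N:ℝ)/β⌉₊ : ℕ):ℝ) := by
      have h3 : (N:ℝ)/β ≤ (⌈(N:ℝ)/β⌉₊ : ℝ) := Nat.le_ceil _
      have h2 : ((⌈(N:ℝ)/β⌉₊ : ℕ) : ℝ) ≤ ((max J ⌈(N:ℝ)/β⌉₊ : ℕ) : ℝ) := by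
        exact_mod_cast le_max_right _ _
      rw [div_le_iff₀ hβ0] at h3
      nlinarith
    calc (2:ℝ) ^ (-(β * ((max J ⌈(N:ℝ)/β⌉₊ : ℕ):ℝ))) ≤ (2:ℝ) ^ (-(N:ℝ)) :=
          (Real.rpow_le_rpow_left_iff (by norm_num : (1:ℝ) < 2)).mpr (by linarith)
      _ ≤ ‖X‖ := by
          rw [Real.rpow_neg (by norm_num),
            inv_le_comm₀ (Real.rpow_pos_of_pos (by norm_num) _) hXpos,
            ← one_div]
          exact hN2
  classical
  set j := Nat.find hex with hjdef
  obtain ⟨hjJ, hjX⟩ := Nat.find_spec hex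
  have hf : (2:ℝ) ^ (-(j:ℝ)) ≤ ‖f X‖ := hJ j hjJ X hX hjX
  rcases eq_or_lt_of_le hjJ with hJj | hJj
  · -- j = J : use the bound R
    have hXR : ‖X‖ ^ (1/β) ≤ R ^ (1/β) :=
      Real.rpow_le_rpow hXpos.le (hR X hX) (by positivity)
    refine (min_le_right _ _).trans ?_
    rw [hJj]
    exact div_le_div₀ (norm_nonneg _) hf hXp hXR
  · -- J < j : minimality
    have hmin := Nat.find_min hex (show j - 1 < j by omega)
    push_neg at hmin
    have hlt : ‖X‖ < (2:ℝ) ^ (-(β * ((j-1:ℕ):ℝ))) := hmin (by omega)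
    have hcast : ((j-1:ℕ):ℝ) = (j:ℝ) - 1 := by
      have : 1 ≤ j := by omega
      push_cast [this]; ring
    have hXlt : ‖X‖ ^ (1/β) < 2 * (2:ℝ) ^ (-(j:ℝ)) := by
      have h2 : (‖X‖ : ℝ) ^ (1/β) < ((2:ℝ) ^ (-(β * ((j-1:ℕ):ℝ)))) ^ (1/β) :=
        Real.rpow_lt_rpow hXpos.le hlt (by positivity)
      have h3 : ((2:ℝ) ^ (-(β * ((j-1:ℕ):ℝ)))) ^ (1/β) = 2 * (2:ℝ) ^ (-(j:ℝ)) := by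
        have he : (-(β * ((j-1:ℕ):ℝ))) * (1/β) = 1 + (-(j:ℝ)) := by
          rw [hcast]; field_simp; ring
        rw [← Real.rpow_mul (by norm_num : (0:ℝ) ≤ 2), he,
          Real.rpow_add (by norm_num : (0:ℝ) < 2), Real.rpow_one]
      rw [h3] at h2; exact h2
    calc min (1/2) ((2:ℝ) ^ (-(J:ℝ)) / R ^ (1/β)) ≤ 1/2 := min_le_left _ _
      _ ≤ ‖f X‖ / ‖X‖ ^ (1/β) := by
          rw [le_div_iff₀ hXp]
          nlinarith
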